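/- arXiv:2404.06447 — 6 statements merged into one kernel-verified Lean document; each statement's English description precedes it below -/
import Mathlib

section
/- Let c be symmetric nonnegative edge costs on the complete graph with N ≥ 3 vertices satisfying the triangle inequality c_{kv} + c_{uv} ≥ c_{ku} for all triples of distinct vertices u, k, v. Then: (i) there exists α₀ (depending on N) such that for every α ≥ α₀ an optimal CST at parameter α is a star tree; and (ii) for every fixed α > 1 there exists N₀ such that for all N ≥ N₀ and all such cost configurations, an optimal CST at parameter α is a star tree. -/
/-!
Root the star at a centroid `u` of the tree `H`, so that every edge of `H` has at most `N / 2`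
vertices on its side away from `u`. By the triangle inequality `c u j` is at most the cost of
the `u`–`j` path in `H`; summing over `j`, each edge `e` of `H` is counted `m_e ≤ N / 2` times,
where `m_e` is the number of vertices beyond `e`. Hence the star costs at most
`∑ₑ ((N - 1) / N²)^α m_e c_e`, and it suffices that
`((N - 1) / N²)^α m ≤ ((N - m) m / N²)^α` for `1 ≤ m ≤ N / 2`. That holds once
`α ≥ log_{N/(N-1)} N`, and, for fixed `α > 1`, once `N` is large: for large `m` because
`(m / 2)^α ≥ m`, for small `m` because `(N - m) / (N - 1) → 1`.
-/

open Classical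

/-- `mu G i j` : the number of vertices in the connected component of `i` in the graph `G`
with the edge `{i, j}` removed, divided by `N`. -/
noncomputable def mu {N : ℕ} (G : SimpleGraph (Fin N)) (i j : Fin N) : ℝ :=
  (((G.deleteEdges {s(i, j)}).connectedComponentMk i).supp.ncard : ℝ) / N

/-- The CST cost of a graph `G` with edge costs `c` at parameter `α`. -/
noncomputable def cstCost {N : ℕ} (G : SimpleGraph (Fin N)) (c : Fin N → Fin N → ℝ)
    (α : ℝ) : ℝ :=
  (1 / 2) * ∑ i, ∑ j, if G.Adj i j then (mu G i j * (1 - mu G i j)) ^ α * c i j else 0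

/-- The star tree centered at `u`. -/
def starGraph {N : ℕ} (u : Fin N) : SimpleGraph (Fin N) :=
  SimpleGraph.fromRel (fun i _ => i = u)

namespace SimpleGraph

variable {V : Type*} {G : SimpleGraph V} {a b u x y z : V}

/-- `mu G a b = (G.side a b).ncard / N` holds by definition. -/
def side (G : SimpleGraph V) (a b : V) : Set V :=
  ((G.deleteEdges {s(a, b)}).connectedComponentMk a).supp

theorem mem_side : x ∈ G.side a b ↔ (G.deleteEdges {s(a, b)}).Reachable x a := by
  rw [side, ConnectedComponent.mem_supp_iff, ConnectedComponent.eq]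

theorem mem_side_swap : x ∈ G.side b a ↔ (G.deleteEdges {s(a, b)}).Reachable x b := by
  rw [mem_side, Sym2.eq_swap]

theorem self_mem_side : a ∈ G.side a b :=
  mem_side.2 .rfl

theorem Walk.reachable_deleteEdges_or_mem_side (p : G.Walk x y) :
    (G.deleteEdges {s(a, b)}).Reachable x y ∨ x ∈ G.side a b ∨ x ∈ G.side b a := by
  rw [mem_side, mem_side_swap]
  induction p with
  | nil => exact .inl .rfl
  | @cons x z y h p ih =>
    by_cases he : s(x, z) = s(a, b)
    · rcases Sym2.eq_iff.1 he with ⟨rfl, -⟩ | ⟨rfl, -⟩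
      · exact .inr (.inl .rfl)
      · exact .inr (.inr .rfl)
    · have hxz : (G.deleteEdges {s(a, b)}).Reachable x z :=
        (deleteEdges_adj.2 ⟨h, he⟩).reachable
      exact ih.imp hxz.trans (Or.imp hxz.trans hxz.trans)

theorem Connected.mem_side_or_mem_side (hG : G.Connected) (a b x : V) :
    x ∈ G.side a b ∨ x ∈ G.side b a := by
  obtain ⟨p⟩ := hG.preconnected x a
  exact (p.reachable_deleteEdges_or_mem_side (a := a) (b := b)).elim (.inl <| mem_side.2 ·) id

theorem IsAcyclic.disjoint_side (hG : G.IsAcyclic) (h : G.Adj a b) :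
    Disjoint (G.side a b) (G.side b a) :=
  Set.disjoint_left.2 fun _ hxa hxb ↦ isBridge_iff.1 (isAcyclic_iff_forall_adj_isBridge.1 hG h)
    ((mem_side.1 hxa).symm.trans (mem_side_swap.1 hxb))

theorem IsTree.not_mem_side_iff (hG : G.IsTree) (h : G.Adj a b) :
    x ∉ G.side a b ↔ x ∈ G.side b a :=
  ⟨(hG.connected.mem_side_or_mem_side a b x).resolve_left,
    fun hx ↦ Set.disjoint_right.1 (hG.isAcyclic.disjoint_side h) hx⟩

theorem IsTree.ncard_side_add_ncard_side [Finite V] (hG : G.IsTree) (h : G.Adj a b) :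
    (G.side a b).ncard + (G.side b a).ncard = Nat.card V := by
  rw [← Set.ncard_union_eq (hG.isAcyclic.disjoint_side h), ← Set.ncard_univ]
  exact congrArg _ (Set.eq_univ_of_forall (hG.connected.mem_side_or_mem_side a b))

theorem reachable_deleteEdges_of_mem_side (hx : x ∈ G.side y z) (hb : b ∉ G.side y z) :
    (G.deleteEdges {s(a, b)}).Reachable x y := by
  obtain ⟨p⟩ := mem_side.1 hx
  refine ⟨(p.mapLe (G.deleteEdges_le _)).toDeleteEdge _ fun he ↦ hb ?_⟩
  rw [Walk.edges_mapLe_eq_edges] at he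
  exact mem_side.2 ⟨p.dropUntil b (p.snd_mem_support_of_mem_edges he)⟩

theorem IsTree.exists_centroid [Fintype V] [Nonempty V] (hG : G.IsTree) :
    ∃ u, ∀ a b, G.Adj a b → u ∈ G.side a b → 2 * (G.side b a).ncard ≤ Nat.card V := by
  set heavy := (Finset.univ : Finset (V × V)).filter
    fun p ↦ G.Adj p.1 p.2 ∧ Nat.card V < 2 * (G.side p.2 p.1).ncard
  rcases heavy.eq_empty_or_nonempty with h | h
  · refine ⟨Classical.arbitrary V, fun a b hab _ ↦ ?_⟩
    by_contra! hlt
    exact Finset.eq_empty_iff_forall_notMem.1 h (a, b)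
      (Finset.mem_filter.2 ⟨Finset.mem_univ _, hab, hlt⟩)
  -- the far side of a lightest heavy edge contains the far side of every other heavy edge
  obtain ⟨⟨a, b⟩, hab, hmin⟩ := heavy.exists_min_image (fun p ↦ (G.side p.2 p.1).ncard) h
  simp only [heavy, Finset.mem_filter, Finset.mem_univ, true_and] at hab hmin
  refine ⟨b, fun x y hxy hbx ↦ ?_⟩
  by_contra! hlt
  obtain ⟨w, hwy, hwb⟩ := Set.nonempty_inter_of_lt_ncard_add_ncard
    (s := G.side y x) (t := G.side b a) (by omega)
  have hby : b ∉ G.side y x := Set.disjoint_left.1 (hG.isAcyclic.disjoint_side hxy) hbx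
  have hsub : G.side y x ⊆ G.side b a := fun v hv ↦ mem_side_swap.2 <|
    ((reachable_deleteEdges_of_mem_side hv hby).trans
      (reachable_deleteEdges_of_mem_side hwy hby).symm).trans (mem_side_swap.1 hwb)
  have hssub : G.side y x ⊂ G.side b a :=
    ssubset_of_subset_not_subset hsub fun h ↦ hby (h self_mem_side)
  exact (Set.ncard_lt_ncard hssub).not_ge (hmin (x, y) ⟨hxy, hlt⟩)

theorem side_starGraph_of_ne (h : x ≠ u) : (starGraph u).side x u = {x} := by
  ext y
  refine ⟨fun hy ↦ ?_, fun hy ↦ hy ▸ self_mem_side⟩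
  by_contra hyx
  refine not_reachable_of_neighborSet_right_eq_empty hyx ?_ (mem_side.1 hy)
  ext w
  simp [h]

variable [Fintype V]

noncomputable def edgesAwayFrom (G : SimpleGraph V) (u : V) : Finset (V × V) :=
  Finset.univ.filter fun p ↦ G.Adj p.1 p.2 ∧ u ∈ G.side p.1 p.2

theorem mem_edgesAwayFrom {p : V × V} :
    p ∈ G.edgesAwayFrom u ↔ G.Adj p.1 p.2 ∧ u ∈ G.side p.1 p.2 := by
  simp [edgesAwayFrom]

noncomputable def separatingEdges (G : SimpleGraph V) (u x : V) : Finset (V × V) :=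
  (G.edgesAwayFrom u).filter fun q ↦ x ∈ G.side q.2 q.1

theorem mem_separatingEdges {q : V × V} :
    q ∈ G.separatingEdges u x ↔ q ∈ G.edgesAwayFrom u ∧ x ∈ G.side q.2 q.1 :=
  Finset.mem_filter

theorem IsTree.sum_adj_eq_two_mul_sum_edgesAwayFrom (hG : G.IsTree) (u : V) {f : V → V → ℝ}
    (hf : ∀ a b, G.Adj a b → f a b = f b a) :
    ∑ i, ∑ j, (if G.Adj i j then f i j else 0) = 2 * ∑ p ∈ G.edgesAwayFrom u, f p.1 p.2 := by
  rw [← Fintype.sum_prod_type', ← Finset.sum_filter,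
    ← Finset.sum_filter_add_sum_filter_not _ fun p ↦ u ∈ G.side p.1 p.2, Finset.filter_filter,
    Finset.filter_filter, two_mul]
  congr 1
  refine Finset.sum_nbij' Prod.swap Prod.swap (fun p hp ↦ ?_) (fun p hp ↦ ?_) (fun _ _ ↦ rfl)
    (fun _ _ ↦ rfl) fun p hp ↦ hf p.1 p.2 (Finset.mem_filter.1 hp).2.1
  · obtain ⟨hadj, hu⟩ := (Finset.mem_filter.1 hp).2
    exact mem_edgesAwayFrom.2 ⟨hadj.symm, (hG.not_mem_side_iff hadj).1 hu⟩
  · obtain ⟨hadj, hu⟩ := mem_edgesAwayFrom.1 hp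
    simpa using ⟨hadj.symm, (hG.not_mem_side_iff hadj.symm).2 hu⟩

theorem IsAcyclic.le_sum_separatingEdges_of_isPath (hG : G.IsAcyclic) {c : V → V → ℝ}
    (hsym : ∀ i j, c i j = c j i) (hpos : ∀ i j, 0 ≤ c i j)
    (htri : ∀ u k v : V, u ≠ k → u ≠ v → k ≠ v → c k u ≤ c k v + c u v)
    {p : G.Walk x u} (hp : p.IsPath) (hxu : x ≠ u) :
    c x u ≤ ∑ q ∈ G.separatingEdges u x, c q.1 q.2 := by
  induction p with
  | nil => exact absurd rfl hxu
  | @cons x z u h p ih =>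
    obtain ⟨hp, hxp⟩ := Walk.cons_isPath_iff _ _ |>.1 hp
    have hdisj := Set.disjoint_left.1 (hG.disjoint_side h.symm)
    have huz : u ∈ G.side z x := mem_side.2 <| reachable_deleteEdges_iff_exists_walk.2
      ⟨p.reverse, fun he ↦ hxp (by simpa using p.reverse.snd_mem_support_of_mem_edges he)⟩
    have hsub : insert (z, x) (G.separatingEdges u z) ⊆ G.separatingEdges u x := by
      refine Finset.insert_subset_iff.2 ⟨mem_separatingEdges.2
        ⟨mem_edgesAwayFrom.2 ⟨h.symm, huz⟩, self_mem_side⟩, fun ⟨a, b⟩ hq ↦ ?_⟩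
      obtain ⟨hq, hzb⟩ := mem_separatingEdges.1 hq
      refine mem_separatingEdges.2 ⟨hq, ?_⟩
      obtain ⟨hab, hua⟩ := mem_edgesAwayFrom.1 hq
      by_cases he : s(x, z) = s(a, b)
      · rcases Sym2.eq_iff.1 he with ⟨rfl, rfl⟩ | ⟨rfl, rfl⟩
        · exact absurd huz (Set.disjoint_left.1 (hG.disjoint_side h) hua)
        · exact absurd hzb (hdisj self_mem_side)
      · exact mem_side_swap.2 <|
          (deleteEdges_adj.2 ⟨h, he⟩).reachable.trans (mem_side_swap.1 hzb)
    have hnot : (z, x) ∉ G.separatingEdges u z :=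
      fun hm ↦ hdisj self_mem_side (mem_separatingEdges.1 hm).2
    have hstep : c x u ≤ c z x + ∑ q ∈ G.separatingEdges u z, c q.1 q.2 := by
      by_cases hzu : z = u
      · subst hzu
        have := Finset.sum_nonneg fun q (_ : q ∈ G.separatingEdges z z) ↦ hpos q.1 q.2
        linarith [hsym x z]
      · linarith [htri u x z hxu.symm (Ne.symm hzu) h.ne, hsym u z, ih hp hzu, hsym x z]
    calc c x u ≤ _ := hstep
      _ = _ := (Finset.sum_insert hnot (f := fun q ↦ c q.1 q.2)).symm
      _ ≤ _ := Finset.sum_le_sum_of_subset_of_nonneg hsub fun q _ _ ↦ hpos q.1 q.2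

theorem sum_sum_separatingEdges (u : V) (f : V × V → ℝ) :
    ∑ x, ∑ q ∈ G.separatingEdges u x, f q =
      ∑ q ∈ G.edgesAwayFrom u, (G.side q.2 q.1).ncard * f q := by
  simp_rw [separatingEdges, Finset.sum_filter]
  rw [Finset.sum_comm]
  refine Finset.sum_congr rfl fun q _ ↦ ?_
  rw [← Finset.sum_filter, Finset.sum_const, nsmul_eq_mul, Set.ncard_eq_toFinset_card']
  simp

theorem edgesAwayFrom_starGraph [DecidableEq V] (u : V) :
    (starGraph u).edgesAwayFrom u = {u} ×ˢ Finset.univ.erase u := by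
  ext ⟨a, b⟩
  simp only [mem_edgesAwayFrom, Finset.mem_product, Finset.mem_singleton, Finset.mem_erase,
    Finset.mem_univ, and_true, starGraph_adj]
  constructor
  · rintro ⟨⟨hab, rfl | rfl⟩, hu⟩
    · exact ⟨rfl, hab.symm⟩
    · rw [side_starGraph_of_ne hab] at hu
      exact absurd hu hab.symm
  · rintro ⟨rfl, hb⟩
    exact ⟨⟨hb.symm, .inl rfl⟩, self_mem_side⟩

end SimpleGraph

/-- For every split of the `N` vertices into `N - m` and `m ≤ N / 2` by an edge, `m` times the
weight of a star edge is at most the weight of the splitting edge. -/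
def StarWeightBound (N : ℕ) (α : ℝ) : Prop :=
  ∀ m : ℕ, 1 ≤ m → 2 * m ≤ N → (((N : ℝ) - 1) / N ^ 2) ^ α * m ≤ ((N - m) * m / N ^ 2 : ℝ) ^ α

theorem starWeightBound_of_rpow_inv_le {N : ℕ} {α : ℝ} (hα : 0 < α)
    (h : ∀ m : ℕ, 2 ≤ m → 2 * m ≤ N → (m : ℝ) ^ α⁻¹ ≤ m * (N - m) / (N - 1)) :
    StarWeightBound N α := by
  intro m hm hmN
  have hmN' : 2 * (m : ℝ) ≤ N := by exact_mod_cast hmN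
  rcases hm.eq_or_lt with rfl | hm2
  · simp
  have hm2' : (2 : ℝ) ≤ m := by exact_mod_cast hm2
  have hN1 : (0 : ℝ) < N - 1 := by linarith
  have hNm : (0 : ℝ) ≤ N - m := by linarith
  have key : (m : ℝ) ≤ (m * (N - m) / (N - 1)) ^ α :=
    (Real.rpow_inv_le_iff_of_pos (by positivity) (by positivity) hα).1 (h m hm2 hmN)
  calc (((N : ℝ) - 1) / N ^ 2) ^ α * m
      ≤ (((N : ℝ) - 1) / N ^ 2) ^ α * (m * (N - m) / (N - 1)) ^ α := by gcongr
    _ = ((N - m) * m / N ^ 2 : ℝ) ^ α := by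
      rw [← Real.mul_rpow (by positivity) (by positivity)]
      congr 1
      field_simp

theorem starWeightBound_of_logb_le {N : ℕ} {α : ℝ} (hN : 3 ≤ N)
    (hα : Real.logb (N / (N - 1)) N ≤ α) : StarWeightBound N α := by
  have hN' : (3 : ℝ) ≤ N := by exact_mod_cast hN
  have hb : 1 < (N : ℝ) / (N - 1) := by rw [one_lt_div (by linarith)]; linarith
  have hα0 : 0 < α := (Real.logb_pos hb (by linarith)).trans_le hα
  refine starWeightBound_of_rpow_inv_le hα0 fun m hm hmN ↦ ?_
  have hm' : (2 : ℝ) ≤ m := by exact_mod_cast hm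
  have hmN' : 2 * (m : ℝ) ≤ N := by exact_mod_cast hmN
  calc (m : ℝ) ^ α⁻¹ ≤ (N : ℝ) ^ α⁻¹ := by gcongr; linarith
    _ ≤ N / (N - 1) := by
      refine (Real.rpow_inv_le_iff_of_pos (by positivity) (by positivity) hα0).2 ?_
      calc (N : ℝ) = (N / (N - 1)) ^ Real.logb (N / (N - 1)) N :=
            (Real.rpow_logb (by positivity) hb.ne' (by positivity)).symm
        _ ≤ (N / (N - 1)) ^ α := Real.rpow_le_rpow_of_exponent_le hb.le hα
    _ ≤ m * (N - m) / (N - 1) := by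
      have hNm : (0 : ℝ) ≤ N - m := by linarith
      exact div_le_div_of_nonneg_right (by nlinarith [mul_nonneg (sub_nonneg.2 hm') hNm])
        (by linarith)

theorem exists_rpow_le_mul_sub_div {γ : ℝ} (hγ : γ < 1) :
    ∃ N₀ : ℕ, ∀ N : ℕ, N₀ ≤ N → ∀ m : ℕ, 2 ≤ m → 2 * m ≤ N →
      (m : ℝ) ^ γ ≤ m * (N - m) / (N - 1) := by
  set M : ℝ := 2 ^ (1 - γ)⁻¹
  set δ : ℝ := 2 ^ (γ - 1)
  have hδ : δ < 1 := Real.rpow_lt_one_of_one_lt_of_neg one_lt_two (by linarith)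
  refine ⟨⌈M / (1 - δ)⌉₊, fun N hN m hm hmN ↦ ?_⟩
  have hm' : (2 : ℝ) ≤ m := by exact_mod_cast hm
  have hmN' : 2 * (m : ℝ) ≤ N := by exact_mod_cast hmN
  have hM : M ≤ N * (1 - δ) :=
    (div_le_iff₀ (by linarith)).1 ((Nat.le_ceil _).trans (by exact_mod_cast hN))
  have hN1 : (0 : ℝ) < N - 1 := by linarith
  rw [le_div_iff₀ hN1]
  have hsplit : (m : ℝ) ^ γ = m * (m : ℝ) ^ (γ - 1) := by
    rw [Real.rpow_sub_one (by positivity)]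
    field_simp
  rw [hsplit]
  -- For `m ≥ M` the factor `m^(γ-1) ≤ 1/2` suffices; for `m < M` the factor
  -- `(N - m) / (N - 1)` tends to `1 > δ` as `N → ∞`.
  rcases le_or_gt M m with hMm | hmM
  · have h2 : 2 ≤ (m : ℝ) ^ (1 - γ) := by
      calc (2 : ℝ) = M ^ (1 - γ) := by
            rw [← Real.rpow_mul zero_le_two, inv_mul_cancel₀ (by linarith), Real.rpow_one]
        _ ≤ (m : ℝ) ^ (1 - γ) := by gcongr
    have hinv : (m : ℝ) ^ (γ - 1) * (m : ℝ) ^ (1 - γ) = 1 := by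
      rw [← Real.rpow_add (by positivity)]; simp
    have hhalf : (m : ℝ) ^ (γ - 1) ≤ 1 / 2 := by nlinarith
    calc (m : ℝ) * (m : ℝ) ^ (γ - 1) * (N - 1) ≤ m * (1 / 2) * (N - 1) := by gcongr
      _ ≤ m * (N - m) := by nlinarith
  · have h1 : (m : ℝ) ^ (γ - 1) ≤ δ := Real.rpow_le_rpow_of_nonpos two_pos hm' (by linarith)
    have hδ0 : 0 < δ := by positivity
    calc (m : ℝ) * (m : ℝ) ^ (γ - 1) * (N - 1) ≤ m * δ * (N - 1) := by gcongr
      _ ≤ m * (N - m) := by nlinarith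

theorem starGraph_eq {N : ℕ} (u : Fin N) : starGraph u = SimpleGraph.starGraph u :=
  rfl

section Cost

variable {N : ℕ} {H : SimpleGraph (Fin N)} {c : Fin N → Fin N → ℝ} {α : ℝ} {a b : Fin N}

theorem mu_mul_one_sub_mu (hH : H.IsTree) (h : H.Adj a b) :
    mu H a b * (1 - mu H a b) = (H.side a b).ncard * (H.side b a).ncard / N ^ 2 := by
  have hsum := hH.ncard_side_add_ncard_side h
  rw [Nat.card_eq_fintype_card, Fintype.card_fin] at hsum
  have hN : (N : ℝ) ≠ 0 := Nat.cast_ne_zero.2 a.pos.ne'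
  have hsumR : ((H.side a b).ncard : ℝ) + (H.side b a).ncard = N := by exact_mod_cast hsum
  change ((H.side a b).ncard : ℝ) / N * (1 - (H.side a b).ncard / N) = _
  rw [show (1 : ℝ) - (H.side a b).ncard / N = (H.side b a).ncard / N by field_simp; linarith]
  ring

theorem cstCost_eq_sum_edgesAwayFrom (hH : H.IsTree)
    (hsym : ∀ i j, c i j = c j i) (u : Fin N) (α : ℝ) :
    cstCost H c α =
      ∑ p ∈ H.edgesAwayFrom u, (mu H p.1 p.2 * (1 - mu H p.1 p.2)) ^ α * c p.1 p.2 := by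
  have hweight : ∀ a b, H.Adj a b → (mu H a b * (1 - mu H a b)) ^ α * c a b =
      (mu H b a * (1 - mu H b a)) ^ α * c b a := fun a b h ↦ by
    rw [mu_mul_one_sub_mu hH h, mu_mul_one_sub_mu hH h.symm, mul_comm ((H.side a b).ncard : ℝ),
      hsym]
  rw [cstCost, hH.sum_adj_eq_two_mul_sum_edgesAwayFrom u hweight]
  ring

theorem cstCost_starGraph (hsym : ∀ i j, c i j = c j i) (u : Fin N) (α : ℝ) :
    cstCost (starGraph u) c α =
      (((N : ℝ) - 1) / N ^ 2) ^ α * ∑ j ∈ Finset.univ.erase u, c u j := by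
  have hT := SimpleGraph.isTree_starGraph u
  rw [starGraph_eq, cstCost_eq_sum_edgesAwayFrom hT hsym u, SimpleGraph.edgesAwayFrom_starGraph,
    Finset.sum_product, Finset.sum_singleton, Finset.mul_sum]
  refine Finset.sum_congr rfl fun j hj ↦ ?_
  have hju := Finset.ne_of_mem_erase hj
  have hadj : (SimpleGraph.starGraph u).Adj u j := by simp [hju.symm]
  have hsum := hT.ncard_side_add_ncard_side hadj
  rw [SimpleGraph.side_starGraph_of_ne hju, Set.ncard_singleton, Nat.card_eq_fintype_card,
    Fintype.card_fin] at hsum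
  have hk : (((SimpleGraph.starGraph u).side u j).ncard : ℝ) = N - 1 :=
    eq_sub_of_add_eq (by exact_mod_cast hsum)
  rw [mu_mul_one_sub_mu hT hadj, SimpleGraph.side_starGraph_of_ne hju, Set.ncard_singleton, hk,
    Nat.cast_one, mul_one]

theorem exists_cstCost_starGraph_le (hH : H.IsTree)
    (hα : StarWeightBound N α) (hsym : ∀ i j, c i j = c j i) (hpos : ∀ i j, 0 ≤ c i j)
    (htri : ∀ u k v : Fin N, u ≠ k → u ≠ v → k ≠ v → c k u ≤ c k v + c u v) :
    ∃ u, cstCost (starGraph u) c α ≤ cstCost H c α := by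
  have := hH.connected.nonempty
  obtain ⟨u, hu⟩ := hH.exists_centroid
  refine ⟨u, ?_⟩
  rw [cstCost_starGraph hsym, cstCost_eq_sum_edgesAwayFrom hH hsym u]
  have hK : 0 ≤ (((N : ℝ) - 1) / N ^ 2) ^ α := by
    have : (1 : ℝ) ≤ N := by exact_mod_cast u.pos
    exact Real.rpow_nonneg (div_nonneg (by linarith) (by positivity)) α
  have hcut : ∑ j ∈ Finset.univ.erase u, c u j ≤ ∑ j, ∑ q ∈ H.separatingEdges u j, c q.1 q.2 :=
    calc _ ≤ ∑ j ∈ Finset.univ.erase u, ∑ q ∈ H.separatingEdges u j, c q.1 q.2 :=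
          Finset.sum_le_sum fun j hj ↦ by
            obtain ⟨p, hp⟩ := (hH.connected.preconnected j u).exists_isPath
            rw [hsym]
            exact hH.isAcyclic.le_sum_separatingEdges_of_isPath hsym hpos htri hp
              (Finset.ne_of_mem_erase hj)
      _ ≤ _ := Finset.sum_le_sum_of_subset_of_nonneg (Finset.subset_univ _) fun j _ _ ↦
          Finset.sum_nonneg fun q _ ↦ hpos _ _
  calc _ ≤ (((N : ℝ) - 1) / N ^ 2) ^ α * ∑ j, ∑ q ∈ H.separatingEdges u j, c q.1 q.2 := by
        gcongr
    _ = ∑ q ∈ H.edgesAwayFrom u,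
        (((N : ℝ) - 1) / N ^ 2) ^ α * (H.side q.2 q.1).ncard * c q.1 q.2 := by
      rw [SimpleGraph.sum_sum_separatingEdges, Finset.mul_sum]
      simp only [mul_assoc]
    _ ≤ _ := Finset.sum_le_sum fun q hq ↦ ?_
  obtain ⟨hadj, huq⟩ := SimpleGraph.mem_edgesAwayFrom.1 hq
  have hsum := hH.ncard_side_add_ncard_side hadj
  have h2m := hu q.1 q.2 hadj huq
  rw [Nat.card_eq_fintype_card, Fintype.card_fin] at hsum h2m
  have hm := (Set.ncard_pos (Set.toFinite _)).2
    ⟨q.2, SimpleGraph.self_mem_side (G := H) (b := q.1)⟩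
  have hk : ((H.side q.1 q.2).ncard : ℝ) = N - (H.side q.2 q.1).ncard :=
    eq_sub_of_add_eq (by exact_mod_cast hsum)
  rw [mu_mul_one_sub_mu hH hadj, hk]
  exact mul_le_mul_of_nonneg_right (hα _ hm h2m) (hpos _ _)

end Cost

theorem exists_optimal_starGraph {N : ℕ} {α : ℝ} {c : Fin N → Fin N → ℝ} (hN : 0 < N)
    (hα : StarWeightBound N α) (hsym : ∀ i j, c i j = c j i) (hpos : ∀ i j, 0 ≤ c i j)
    (htri : ∀ u k v : Fin N, u ≠ k → u ≠ v → k ≠ v → c k u ≤ c k v + c u v) :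
    ∃ G : SimpleGraph (Fin N), G.IsTree ∧ (∃ u : Fin N, G = starGraph u) ∧
      ∀ H : SimpleGraph (Fin N), H.IsTree → cstCost G c α ≤ cstCost H c α := by
  obtain ⟨u₀, -, hmin⟩ := Finset.univ.exists_min_image (fun u ↦ cstCost (starGraph u) c α)
    (Finset.univ_nonempty_iff.2 ⟨⟨0, hN⟩⟩)
  refine ⟨starGraph u₀, SimpleGraph.isTree_starGraph u₀, ⟨u₀, rfl⟩, fun H hH ↦ ?_⟩
  obtain ⟨u, hu⟩ := exists_cstCost_starGraph_le hH hα hsym hpos htri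
  exact (hmin u (Finset.mem_univ u)).trans hu

/-- Under the triangle inequality: (i) for each `N ≥ 3` there is a threshold `α₀`
(depending only on `N`) beyond which an optimal CST is a star tree; (ii) for each fixed
`α > 1` there is `N₀` such that for all `N ≥ N₀` and all cost configurations an optimal
CST is a star tree. -/
theorem cst_star_limit_alpha_and_N :
    (∀ N : ℕ, 3 ≤ N → ∃ α₀ : ℝ, ∀ α : ℝ, α₀ ≤ α →
      ∀ c : Fin N → Fin N → ℝ, (∀ i j, c i j = c j i) → (∀ i j, 0 ≤ c i j) →
        (∀ u k v : Fin N, u ≠ k → u ≠ v → k ≠ v → c k u ≤ c k v + c u v) →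
        ∃ G : SimpleGraph (Fin N), G.IsTree ∧ (∃ u : Fin N, G = starGraph u) ∧
          ∀ H : SimpleGraph (Fin N), H.IsTree → cstCost G c α ≤ cstCost H c α) ∧
    (∀ α : ℝ, 1 < α → ∃ N₀ : ℕ, ∀ N : ℕ, N₀ ≤ N → 3 ≤ N →
      ∀ c : Fin N → Fin N → ℝ, (∀ i j, c i j = c j i) → (∀ i j, 0 ≤ c i j) →
        (∀ u k v : Fin N, u ≠ k → u ≠ v → k ≠ v → c k u ≤ c k v + c u v) →
        ∃ G : SimpleGraph (Fin N), G.IsTree ∧ (∃ u : Fin N, G = starGraph u) ∧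
          ∀ H : SimpleGraph (Fin N), H.IsTree → cstCost G c α ≤ cstCost H c α) := by
  refine ⟨fun N hN ↦ ⟨Real.logb (N / (N - 1)) N, fun α hα c hsym hpos htri ↦ ?_⟩, fun α hα ↦ ?_⟩
  · exact exists_optimal_starGraph (by omega) (starWeightBound_of_logb_le hN hα) hsym hpos htri
  · obtain ⟨N₀, hN₀⟩ := exists_rpow_le_mul_sub_div (inv_lt_one_of_one_lt₀ hα)
    refine ⟨N₀, fun N hN₀N hN c hsym hpos htri ↦ ?_⟩
    exact exists_optimal_starGraph (by omega)
      (starWeightBound_of_rpow_inv_le (by linarith) (hN₀ N hN₀N)) hsym hpos htri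
end

section
/- Let c be symmetric positive edge costs on the complete graph with N ≥ 3 vertices satisfying the strict triangle inequality c_{uv} + c_{kv} > c_{ku} for all triples of distinct vertices u, k, v. Then there exists α₀ ∈ ℝ such that for every α ≤ α₀, for every spanning tree T that is not a Hamiltonian path there exists a Hamiltonian path whose CST cost at parameter α is strictly lower than that of T. -/
/-!
In a tree the edge factor `m (1 - m)` is smallest, equal to `(1/N)(1 - 1/N)`, exactly on leaf
edges, and on an edge whose two ends both have degree `≥ 2` it is at least `(2/N)(1 - 2/N)`,
which is strictly larger once `N ≥ 4`. So as `α → -∞` the CST cost of a tree is governed by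
`((1/N)(1 - 1/N))^α` times the total cost of its leaf edges. A tree with a vertex of degree
`≥ 3` has three leaf edges `uₖwₖ`, a Hamiltonian path only two. If two of the leaves have
different neighbours, their two edges are disjoint and cheaper than all three; if all three hang
at one vertex `w`, the strict triangle inequality makes `u₁w` and `u₂u₃` cheaper. The
Hamiltonian path `a, b, …, c, d` through such a pair of disjoint edges `ab`, `cd` beats the tree
for `α` small enough, and as there are finitely many trees one threshold serves them all.
-/

open Classical

open SimpleGraph Finset Filter

namespace SimpleGraph

variable {V : Type*} {G : SimpleGraph V} {u v : V}

theorem Connected.not_adj_of_neighborSet_eq_singleton [Fintype V] (hG : G.Connected)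
    (hV : 2 < Fintype.card V) {x y : V} (hu : G.neighborSet u = {x})
    (hv : G.neighborSet v = {y}) : ¬ G.Adj u v := by
  intro huv
  have hx : v = x := by rw [← Set.mem_singleton_iff, ← hu]; exact huv
  have hy : u = y := by rw [← Set.mem_singleton_iff, ← hv]; exact huv.symm
  subst hx hy
  have hclosed : ∀ z ∈ ({u, v} : Set V), G.neighborSet z ⊆ {u, v} := by
    rintro z (rfl | rfl) <;> simp [hu, hv]
  obtain ⟨z, hz⟩ : ∃ z, z ∉ ({u, v} : Set V) := by
    by_contra! h
    have := Set.ncard_le_ncard (fun z (_ : z ∈ Set.univ) => h z) (Set.toFinite {u, v})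
    rw [Set.ncard_univ, Nat.card_eq_fintype_card] at this
    have := (Set.ncard_insert_le u {v}).trans_eq (by rw [Set.ncard_singleton])
    omega
  obtain ⟨d, -, hd, hd'⟩ := (hG.preconnected u z).some.exists_boundary_dart {u, v} (by simp) hz
  exact hd' (hclosed _ hd d.adj)

theorem Connected.reachable_deleteEdges_or (hG : G.Connected) (x : V) :
    (G.deleteEdges {s(u, v)}).Reachable u x ∨ (G.deleteEdges {s(u, v)}).Reachable v x := by
  set H := G.deleteEdges {s(u, v)}
  by_contra h
  obtain ⟨d, -, hd, hd'⟩ := (hG.preconnected u x).some.exists_boundary_dart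
    {y | H.Reachable u y ∨ H.Reachable v y} (Or.inl .rfl) h
  apply hd'
  by_cases he : s(d.fst, d.snd) = s(u, v)
  · rcases Sym2.eq_iff.mp he with ⟨-, h⟩ | ⟨-, h⟩
    · exact Or.inr (h ▸ .rfl)
    · exact Or.inl (h ▸ .rfl)
  · have hadj : H.Adj d.fst d.snd := (deleteEdges_adj ..).mpr ⟨d.adj, he⟩
    exact hd.imp (·.trans hadj.reachable) (·.trans hadj.reachable)

theorem IsAcyclic.not_reachable_deleteEdges (hG : G.IsAcyclic) (h : G.Adj u v) :
    ¬ (G.deleteEdges {s(u, v)}).Reachable u v :=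
  isAcyclic_iff_forall_adj_isBridge.mp hG h

theorem IsTree.ncard_supp_add_ncard_supp [Finite V] (hG : G.IsTree) (h : G.Adj u v) :
    ((G.deleteEdges {s(u, v)}).connectedComponentMk u).supp.ncard +
      ((G.deleteEdges {s(u, v)}).connectedComponentMk v).supp.ncard = Nat.card V := by
  rw [← Set.ncard_union_eq, ← Set.ncard_univ]
  · congr
    ext x
    simp only [ConnectedComponent.mem_supp_iff, ConnectedComponent.eq, Set.mem_union,
      Set.mem_univ, iff_true]
    exact (hG.connected.reachable_deleteEdges_or x).imp (·.symm) (·.symm)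
  · refine Set.disjoint_left.mpr fun x hxu hxv => hG.isAcyclic.not_reachable_deleteEdges h ?_
    rw [ConnectedComponent.mem_supp_iff, ConnectedComponent.eq] at hxu hxv
    exact hxu.symm.trans hxv

theorem IsAcyclic.ncard_neighborSet_le_ncard_supp [Finite V] (hG : G.IsAcyclic)
    (h : G.Adj u v) :
    (G.neighborSet u).ncard ≤ ((G.deleteEdges {s(u, v)}).connectedComponentMk u).supp.ncard := by
  have hsub : insert u (G.neighborSet u) ⊆
      insert v ((G.deleteEdges {s(u, v)}).connectedComponentMk u).supp := by
    rintro x (rfl | hx)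
    · exact Or.inr rfl
    · by_cases hxv : x = v
      · exact Or.inl hxv
      · refine Or.inr (ConnectedComponent.eq.mpr (Adj.reachable ?_).symm)
        refine (deleteEdges_adj ..).mpr ⟨hx, fun he => hxv ?_⟩
        rcases Sym2.eq_iff.mp (Set.mem_singleton_iff.mp he) with ⟨-, hxv⟩ | ⟨huv, hxu⟩
        exacts [hxv, hxu.trans huv]
  have hv : v ∉ ((G.deleteEdges {s(u, v)}).connectedComponentMk u).supp :=
    fun hv => hG.not_reachable_deleteEdges h (ConnectedComponent.eq.mp hv).symm
  have := Set.ncard_le_ncard hsub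
  rwa [Set.ncard_insert_of_notMem G.notMem_neighborSet_self, Set.ncard_insert_of_notMem hv,
    add_le_add_iff_right] at this

theorem supp_connectedComponentMk_deleteEdges_of_neighborSet_eq (h : G.neighborSet u = {v}) :
    ((G.deleteEdges {s(u, v)}).connectedComponentMk u).supp = {u} := by
  ext x
  simp only [ConnectedComponent.mem_supp_iff, ConnectedComponent.eq, Set.mem_singleton_iff]
  refine ⟨fun hx => ?_, fun hx => hx ▸ .rfl⟩
  obtain ⟨p⟩ := hx.symm
  cases p with
  | nil => rfl
  | @cons _ y _ hadj _ =>
    obtain ⟨hadj, hne⟩ := (deleteEdges_adj ..).mp hadj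
    have hy : y = v := by rw [← Set.mem_singleton_iff, ← h]; exact hadj
    exact absurd (by rw [hy]; rfl) hne

theorem ncard_neighborSet_eq_degree [Fintype V] (v : V) :
    (G.neighborSet v).ncard = G.degree v := by
  rw [Set.ncard_eq_toFinset_card', Set.toFinset_card, card_neighborSet_eq_degree]

/-- Count with the degree sum `2 (|V| - 1)` of a tree, in which every degree is positive. -/
theorem IsTree.two_lt_card_leaves [Fintype V] (hG : G.IsTree)
    (hv : 2 < (G.neighborSet v).ncard) : 2 < #{u | (G.neighborSet u).ncard = 1} := by
  simp_rw [ncard_neighborSet_eq_degree] at hv ⊢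
  obtain ⟨x, hx⟩ := (G.degree_pos_iff_exists_adj v).mp (by omega)
  have : Nontrivial V := ⟨⟨v, x, hx.ne⟩⟩
  have hpos := hG.connected.preconnected.degree_pos_of_nontrivial (G := G)
  have hsum : ∑ u, G.degree u + 2 = 2 * Fintype.card V := by
    rw [sum_degrees_eq_twice_card_edges, ← hG.card_edgeFinset]
    ring
  have hle : ∑ u, (2 + if u = v then 1 else 0) ≤
      ∑ u, (G.degree u + if G.degree u = 1 then 1 else 0) :=
    sum_le_sum fun u _ => by have := hpos u; split_ifs <;> subst_vars <;> omega
  rw [sum_add_distrib, sum_add_distrib, sum_boole, sum_boole, sum_const, card_univ,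
    smul_eq_mul, show #{u | u = v} = 1 from card_eq_one.mpr ⟨v, by ext; simp⟩] at hle
  simp only [Nat.cast_id] at hle
  omega

end SimpleGraph

section Mu

variable {N : ℕ} {T : SimpleGraph (Fin N)} {i j : Fin N}

theorem mu_of_neighborSet_eq_singleton (h : T.neighborSet i = {j}) : mu T i j = 1 / N := by
  rw [mu, supp_connectedComponentMk_deleteEdges_of_neighborSet_eq h, Set.ncard_singleton,
    Nat.cast_one]

theorem ncard_neighborSet_div_le_mu (hT : T.IsAcyclic) (h : T.Adj i j) :
    ((T.neighborSet i).ncard : ℝ) / N ≤ mu T i j :=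
  div_le_div_of_nonneg_right (by exact_mod_cast hT.ncard_neighborSet_le_ncard_supp h)
    (Nat.cast_nonneg N)

theorem mu_add_mu_swap (hT : T.IsTree) (h : T.Adj i j) : mu T i j + mu T j i = 1 := by
  have hN : (N : ℝ) ≠ 0 := Nat.cast_ne_zero.mpr (Fin.pos i).ne'
  rw [mu, mu, show s(j, i) = s(i, j) from Sym2.eq_swap, ← add_div, ← Nat.cast_add,
    hT.ncard_supp_add_ncard_supp h, Nat.card_eq_fintype_card, Fintype.card_fin, div_self hN]

theorem mu_swap_mul_one_sub (hT : T.IsTree) (h : T.Adj i j) :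
    mu T j i * (1 - mu T j i) = mu T i j * (1 - mu T i j) := by
  rw [show mu T j i = 1 - mu T i j by linarith [mu_add_mu_swap hT h]]
  ring

-- `mu T i j` and `1 - mu T i j = mu T j i` are both at least `k / N`.
theorem le_mu_mul_one_sub (hT : T.IsTree) (h : T.Adj i j) {k : ℕ}
    (hi : k ≤ (T.neighborSet i).ncard) (hj : k ≤ (T.neighborSet j).ncard) :
    (k / N : ℝ) * (1 - k / N) ≤ mu T i j * (1 - mu T i j) := by
  have hki : (k / N : ℝ) ≤ mu T i j := (div_le_div_of_nonneg_right (by exact_mod_cast hi)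
    (Nat.cast_nonneg N)).trans (ncard_neighborSet_div_le_mu hT.isAcyclic h)
  have hkj : (k / N : ℝ) ≤ mu T j i := (div_le_div_of_nonneg_right (by exact_mod_cast hj)
    (Nat.cast_nonneg N)).trans (ncard_neighborSet_div_le_mu hT.isAcyclic h.symm)
  nlinarith [mu_add_mu_swap hT h]

theorem mu_mul_one_sub_nonneg (hT : T.IsTree) (h : T.Adj i j) :
    0 ≤ mu T i j * (1 - mu T i j) := by
  simpa using le_mu_mul_one_sub hT h (Nat.zero_le _) (Nat.zero_le _)

end Mu

noncomputable def dartSum {V : Type*} [Fintype V] (G : SimpleGraph V) (f : V → V → ℝ) : ℝ :=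
  ∑ i, ∑ j, if G.Adj i j then f i j else 0

noncomputable def cstDart {N : ℕ} (G : SimpleGraph (Fin N)) (c : Fin N → Fin N → ℝ) (α : ℝ)
    (i j : Fin N) : ℝ :=
  (mu G i j * (1 - mu G i j)) ^ α * c i j

theorem cstCost_eq_dartSum {N : ℕ} (G : SimpleGraph (Fin N)) (c : Fin N → Fin N → ℝ) (α : ℝ) :
    cstCost G c α = 1 / 2 * dartSum G (cstDart G c α) :=
  rfl

section DartSum

variable {V : Type*} [Fintype V] {G : SimpleGraph V}

theorem dartSum_eq_of_forall_not_adj [DecidableEq V] (f : V → V → ℝ) {E : Finset V}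
    (hE : ∀ u ∈ E, ∀ v ∈ E, ¬ G.Adj u v) :
    dartSum G f = ∑ u ∈ E, (∑ j, (if G.Adj u j then f u j else 0) +
        ∑ i, (if G.Adj i u then f i u else 0)) +
      ∑ i ∈ Eᶜ, ∑ j ∈ Eᶜ, (if G.Adj i j then f i j else 0) := by
  set g : V → V → ℝ := fun i j => if G.Adj i j then f i j else 0
  have hcol : ∀ j ∈ E, ∑ i ∈ Eᶜ, g i j = ∑ i, g i j := fun j hj => by
    rw [← sum_compl_add_sum E, sum_eq_zero (fun i hi => if_neg (hE i hi j hj)), add_zero]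
  calc dartSum G f = ∑ i ∈ E, ∑ j, g i j + ∑ i ∈ Eᶜ, (∑ j ∈ E, g i j + ∑ j ∈ Eᶜ, g i j) := by
        simp_rw [sum_add_sum_compl]
        rfl
    _ = _ := by
        rw [sum_add_distrib, sum_comm (s := Eᶜ) (t := E), sum_congr rfl hcol, sum_add_distrib]
        ring

theorem sum_ite_adj_of_neighborSet_eq {u w : V} (h : G.neighborSet u = {w}) (g : V → ℝ) :
    ∑ j, (if G.Adj u j then g j else 0) = g w := by
  have hadj : ∀ j, G.Adj u j ↔ j = w := fun j => by
    rw [← mem_neighborSet, h, Set.mem_singleton_iff]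
  rw [sum_eq_single w (fun j _ hj => if_neg (hj ∘ (hadj j).mp)) (by simp),
    if_pos ((hadj w).mpr rfl)]

end DartSum

section Cost

variable {N : ℕ} {T : SimpleGraph (Fin N)} {c : Fin N → Fin N → ℝ} {α : ℝ}

theorem cstDart_nonneg (hT : T.IsTree) (hc₀ : ∀ i j, i ≠ j → 0 ≤ c i j) {i j : Fin N}
    (h : T.Adj i j) : 0 ≤ cstDart T c α i j :=
  mul_nonneg (Real.rpow_nonneg (mu_mul_one_sub_nonneg hT h) α) (hc₀ i j h.ne)

theorem sum_cstDart_of_neighborSet_eq (hT : T.IsTree) (hc : ∀ i j, c i j = c j i)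
    {u w : Fin N} (h : T.neighborSet u = {w}) :
    ∑ j, (if T.Adj u j then cstDart T c α u j else 0) +
        ∑ i, (if T.Adj i u then cstDart T c α i u else 0) =
      2 * (1 / N * (1 - 1 / N)) ^ α * c u w := by
  have hadj : T.Adj u w := by rw [← mem_neighborSet, h]; rfl
  simp_rw [T.adj_comm _ u]
  rw [sum_ite_adj_of_neighborSet_eq h, sum_ite_adj_of_neighborSet_eq h]
  simp only [cstDart, mu_swap_mul_one_sub hT hadj, mu_of_neighborSet_eq_singleton h, hc w u]
  ring

theorem le_cstCost_of_leaves (hT : T.IsTree) (hN : 2 < N) (hc : ∀ i j, c i j = c j i)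
    (hc₀ : ∀ i j, i ≠ j → 0 ≤ c i j) {E : Finset (Fin N)} {w : Fin N → Fin N}
    (hE : ∀ u ∈ E, T.neighborSet u = {w u}) :
    (1 / N * (1 - 1 / N)) ^ α * ∑ u ∈ E, c u (w u) ≤ cstCost T c α := by
  have hind : ∀ u ∈ E, ∀ v ∈ E, ¬ T.Adj u v := fun u hu v hv =>
    hT.connected.not_adj_of_neighborSet_eq_singleton (by simpa using hN) (hE u hu) (hE v hv)
  have hrest : 0 ≤ ∑ i ∈ Eᶜ, ∑ j ∈ Eᶜ, (if T.Adj i j then cstDart T c α i j else 0) :=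
    sum_nonneg fun i _ => sum_nonneg fun j _ => by
      split_ifs with h
      exacts [cstDart_nonneg hT hc₀ h, le_rfl]
  rw [cstCost_eq_dartSum, dartSum_eq_of_forall_not_adj _ hind,
    sum_congr rfl fun u hu => sum_cstDart_of_neighborSet_eq hT hc (hE u hu), ← mul_sum]
  linarith

theorem cstCost_le_of_path {P : SimpleGraph (Fin N)} (hP : P.IsTree) (hN : 2 < N)
    (hc : ∀ i j, c i j = c j i) (hc₀ : ∀ i j, i ≠ j → 0 ≤ c i j) (hα : α ≤ 0)
    {a b c' d : Fin N} (had : a ≠ d) (ha : P.neighborSet a = {b})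
    (hd : P.neighborSet d = {c'}) (hmid : ∀ v, v ≠ a → v ≠ d → 2 ≤ (P.neighborSet v).ncard) :
    cstCost P c α ≤ (1 / N * (1 - 1 / N)) ^ α * (c a b + c c' d) +
      (2 / N * (1 - 2 / N)) ^ α * ∑ i, ∑ j, |c i j| := by
  have hN' : (2 : ℝ) < N := by exact_mod_cast hN
  have hx : 0 < (2 / N * (1 - 2 / N) : ℝ) := by
    have : (2 / N : ℝ) < 1 := (div_lt_one (by linarith)).mpr hN'
    exact mul_pos (by positivity) (by linarith)
  have hterm i j : 0 ≤ (2 / N * (1 - 2 / N) : ℝ) ^ α * |c i j| :=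
    mul_nonneg (Real.rpow_nonneg hx.le α) (abs_nonneg _)
  have hind : ∀ u ∈ ({a, d} : Finset (Fin N)), ∀ v ∈ ({a, d} : Finset (Fin N)), ¬ P.Adj u v := by
    have := hP.connected.not_adj_of_neighborSet_eq_singleton (by simpa using hN) ha hd
    simp only [mem_insert, mem_singleton]
    rintro u (rfl | rfl) v (rfl | rfl)
    exacts [P.irrefl, this, fun h => this h.symm, P.irrefl]
  have hrest : ∑ i ∈ {a, d}ᶜ, ∑ j ∈ {a, d}ᶜ, (if P.Adj i j then cstDart P c α i j else 0) ≤
      (2 / N * (1 - 2 / N)) ^ α * ∑ i, ∑ j, |c i j| :=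
    calc _ ≤ ∑ i ∈ {a, d}ᶜ, ∑ j ∈ {a, d}ᶜ, (2 / N * (1 - 2 / N) : ℝ) ^ α * |c i j| := by
          refine sum_le_sum fun i hi => sum_le_sum fun j hj => ?_
          simp only [mem_compl, mem_insert, mem_singleton, not_or] at hi hj
          split_ifs with h
          · have hbal := le_mu_mul_one_sub hP h (hmid i hi.1 hi.2) (hmid j hj.1 hj.2)
            push_cast at hbal
            exact mul_le_mul (Real.rpow_le_rpow_of_nonpos hx hbal hα) (le_abs_self _)
              (hc₀ i j h.ne) (Real.rpow_nonneg hx.le α)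
          · exact hterm i j
      _ ≤ ∑ i, ∑ j, (2 / N * (1 - 2 / N) : ℝ) ^ α * |c i j| :=
          (sum_le_sum fun i _ => sum_le_univ_sum_of_nonneg (hterm i)).trans
            (sum_le_univ_sum_of_nonneg fun i => sum_nonneg fun j _ => hterm i j)
      _ = _ := by simp_rw [mul_sum]
  have hK : 0 ≤ (2 / N * (1 - 2 / N) : ℝ) ^ α * ∑ i, ∑ j, |c i j| := by
    simpa only [mul_sum] using sum_nonneg fun i _ => sum_nonneg fun j _ => hterm i j
  rw [cstCost_eq_dartSum, dartSum_eq_of_forall_not_adj _ hind, sum_pair had,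
    sum_cstDart_of_neighborSet_eq hP hc ha, sum_cstDart_of_neighborSet_eq hP hc hd, hc d c']
  linarith

end Cost

namespace SimpleGraph

variable {N : ℕ}

theorem pathGraph_isAcyclic (N : ℕ) : (pathGraph N).IsAcyclic := by
  have hbridge : ∀ x y : Fin N, x.val + 1 = y.val →
      ¬ ((pathGraph N).deleteEdges {s(x, y)}).Reachable x y := by
    rintro x y hxy ⟨p⟩
    obtain ⟨d, -, hd, hd'⟩ := p.exists_boundary_dart {z | z.val ≤ x.val} (by simp)
      (by simp; omega)
    obtain ⟨hadj, hne⟩ := (deleteEdges_adj ..).mp d.adj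
    simp only [Set.mem_ofPred_eq, not_le] at hd hd'
    rw [pathGraph_adj] at hadj
    have hfst : d.fst = x := Fin.ext (by omega)
    have hsnd : d.snd = y := Fin.ext (by omega)
    exact hne (by rw [hfst, hsnd]; rfl)
  refine isAcyclic_iff_forall_adj_isBridge.mpr fun u v huv => ?_
  rcases pathGraph_adj.mp huv with h | h
  · exact hbridge u v h
  · rw [isBridge_iff, Sym2.eq_swap]
    exact fun hr => hbridge v u h hr.symm

theorem pathGraph_isTree (hN : 0 < N) : (pathGraph N).IsTree :=
  have : Nonempty (Fin N) := ⟨⟨0, hN⟩⟩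
  ⟨⟨pathGraph_preconnected N⟩, pathGraph_isAcyclic N⟩

theorem ncard_neighborSet_pathGraph_le (v : Fin N) : ((pathGraph N).neighborSet v).ncard ≤ 2 :=
  calc _ = (Fin.val '' (pathGraph N).neighborSet v).ncard :=
        (Set.ncard_image_of_injective _ Fin.val_injective).symm
    _ ≤ ({v.val - 1, v.val + 1} : Set ℕ).ncard := by
        refine Set.ncard_le_ncard ?_ (Set.toFinite _)
        rintro _ ⟨u, hu, rfl⟩
        rw [mem_neighborSet, pathGraph_adj] at hu
        simp only [Set.mem_insert_iff, Set.mem_singleton_iff]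
        omega
    _ ≤ 2 := (Set.ncard_insert_le _ _).trans (by rw [Set.ncard_singleton])

theorem two_le_ncard_neighborSet_pathGraph {v : Fin N} (h₀ : 0 < v.val) (h₁ : v.val + 1 < N) :
    2 ≤ ((pathGraph N).neighborSet v).ncard := by
  have hsub : {⟨v.val - 1, by omega⟩, ⟨v.val + 1, h₁⟩} ⊆ (pathGraph N).neighborSet v := by
    rintro u (rfl | rfl)
    · simp [pathGraph_adj]; omega
    · simp [pathGraph_adj]
  rw [← Set.ncard_pair (a := (⟨v.val - 1, by omega⟩ : Fin N)) (b := ⟨v.val + 1, h₁⟩)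
    (by simp [Fin.ext_iff])]
  exact Set.ncard_le_ncard hsub

theorem neighborSet_pathGraph_zero (hN : 1 < N) :
    (pathGraph N).neighborSet ⟨0, by omega⟩ = {⟨1, hN⟩} := by
  ext u
  simp [pathGraph_adj, Fin.ext_iff, eq_comm]

theorem neighborSet_pathGraph_last (hN : 1 < N) :
    (pathGraph N).neighborSet ⟨N - 1, by omega⟩ = {⟨N - 2, by omega⟩} := by
  ext u
  simp only [mem_neighborSet, pathGraph_adj, Set.mem_singleton_iff, Fin.ext_iff]
  omega

-- The path graph relabelled so that it runs `a, b, …, c, d`.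
theorem exists_spanning_path_of_nodup (hN : 4 ≤ N) {a b c d : Fin N}
    (h : [a, b, c, d].Nodup) :
    ∃ P : SimpleGraph (Fin N), P.IsTree ∧ (∀ v, (P.neighborSet v).ncard ≤ 2) ∧
      P.neighborSet a = {b} ∧ P.neighborSet d = {c} ∧
      ∀ v, v ≠ a → v ≠ d → 2 ≤ (P.neighborSet v).ncard := by
  obtain ⟨σ, hσ⟩ := Equiv.Perm.exists_extending_pair
    ![(⟨0, by omega⟩ : Fin N), ⟨1, by omega⟩, ⟨N - 2, by omega⟩, ⟨N - 1, by omega⟩] ![a, b, c, d]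
    (by intro i j; fin_cases i <;> fin_cases j <;> simp [Fin.ext_iff] <;> omega)
    (by intro i j; fin_cases i <;> fin_cases j <;> simp_all [eq_comm])
  have h₀ : σ ⟨0, by omega⟩ = a := hσ 0
  have h₁ : σ ⟨1, by omega⟩ = b := hσ 1
  have h₂ : σ ⟨N - 2, by omega⟩ = c := hσ 2
  have h₃ : σ ⟨N - 1, by omega⟩ = d := hσ 3
  have hnbr (x : Fin N) : ((pathGraph N).map σ.toEmbedding).neighborSet (σ x) =
      σ '' (pathGraph N).neighborSet x :=
    (pathGraph N).neighborSet_map σ.toEmbedding x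
  have hncard (x : Fin N) : (((pathGraph N).map σ.toEmbedding).neighborSet (σ x)).ncard =
      ((pathGraph N).neighborSet x).ncard := by
    rw [hnbr, Set.ncard_image_of_injective _ σ.injective]
  refine ⟨(pathGraph N).map σ.toEmbedding,
    (Iso.map σ _).isTree_iff.mp (pathGraph_isTree (by omega)), fun v => ?_, ?_, ?_,
    fun v hva hvd => ?_⟩
  · rw [← σ.apply_symm_apply v, hncard]
    exact ncard_neighborSet_pathGraph_le _
  · rw [← h₀, hnbr, neighborSet_pathGraph_zero (by omega), Set.image_singleton, h₁]
  · rw [← h₃, hnbr, neighborSet_pathGraph_last (by omega), Set.image_singleton, h₂]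
  · rw [← σ.apply_symm_apply v, hncard]
    refine two_le_ncard_neighborSet_pathGraph (Nat.pos_of_ne_zero fun h => hva ?_) ?_
    · rw [← h₀, ← σ.apply_symm_apply v]
      congr 1
      exact Fin.ext h
    · by_contra! h
      apply hvd
      rw [← h₃, ← σ.apply_symm_apply v]
      congr 1
      exact Fin.ext (show (σ.symm v).val = N - 1 by have := (σ.symm v).isLt; omega)

end SimpleGraph

theorem exists_nodup_add_lt_of_leaves {V : Type*} [Fintype V] {G : SimpleGraph V}
    (hG : G.Connected) (hV : 2 < Fintype.card V) {c : V → V → ℝ} (hc : ∀ i j, c i j = c j i)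
    (hpos : ∀ i j, i ≠ j → 0 < c i j)
    (htri : ∀ u k v : V, u ≠ k → u ≠ v → k ≠ v → c k u < c u v + c k v)
    {u₁ u₂ u₃ w₁ w₂ w₃ : V} (hu : [u₁, u₂, u₃].Nodup) (h₁ : G.neighborSet u₁ = {w₁})
    (h₂ : G.neighborSet u₂ = {w₂}) (h₃ : G.neighborSet u₃ = {w₃}) :
    ∃ a b c' d, [a, b, c', d].Nodup ∧ c a b + c c' d < c u₁ w₁ + c u₂ w₂ + c u₃ w₃ := by
  have hne {u w v x : V} (hu : G.neighborSet u = {w}) (hv : G.neighborSet v = {x}) : w ≠ v :=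
    fun hwv => hG.not_adj_of_neighborSet_eq_singleton hV hu hv
      (hwv ▸ by rw [← mem_neighborSet, hu]; rfl)
  have := hne h₁ h₁; have := hne h₁ h₂; have := hne h₁ h₃
  have := hne h₂ h₁; have := hne h₂ h₂; have := hne h₂ h₃
  have := hne h₃ h₁; have := hne h₃ h₂; have := hne h₃ h₃
  simp only [List.nodup_cons, List.mem_cons, List.not_mem_nil, or_false, not_or] at hu ⊢
  by_cases h₁₂ : w₁ = w₂
  · by_cases h₁₃ : w₁ = w₃
    · subst h₁₂ h₁₃
      refine ⟨u₁, w₁, u₃, u₂, by simp_all [eq_comm], ?_⟩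
      linarith [htri u₂ u₃ w₁ hu.2.1 (Ne.symm ‹w₁ ≠ u₂›) (Ne.symm ‹w₁ ≠ u₃›)]
    · refine ⟨u₁, w₁, w₃, u₃, by simp_all [eq_comm], ?_⟩
      linarith [hpos u₂ w₂ (Ne.symm ‹w₂ ≠ u₂›), hc w₃ u₃]
  · refine ⟨u₁, w₁, w₂, u₂, by simp_all [eq_comm], ?_⟩
    linarith [hpos u₃ w₃ (Ne.symm ‹w₃ ≠ u₃›), hc w₂ u₂]

theorem eventually_mul_rpow_lt_mul_rpow {a b : ℝ} (ha : 0 < a) (hab : a < b) (K : ℝ) {δ : ℝ}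
    (hδ : 0 < δ) : ∀ᶠ α : ℝ in atBot, K * b ^ α < δ * a ^ α := by
  have hlim : Tendsto (fun α : ℝ => K * (b / a) ^ α) atBot (nhds 0) := by
    simpa using (tendsto_rpow_atBot_of_base_gt_one _ ((one_lt_div ha).mpr hab)).const_mul K
  filter_upwards [hlim.eventually (gt_mem_nhds hδ)] with α hα
  rw [show b = b / a * a from (div_mul_cancel₀ b ha.ne').symm,
    Real.mul_rpow (div_pos (ha.trans hab) ha).le ha.le, ← mul_assoc]
  exact mul_lt_mul_of_pos_right hα (Real.rpow_pos_of_pos ha α)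

theorem SimpleGraph.IsTree.eventually_exists_path_cstCost_lt_of_leaves {N : ℕ}
    {T : SimpleGraph (Fin N)} (hT : T.IsTree) (hN : 4 ≤ N) {c : Fin N → Fin N → ℝ}
    (hc : ∀ i j, c i j = c j i) (hc₀ : ∀ i j, i ≠ j → 0 ≤ c i j) {E : Finset (Fin N)}
    {w : Fin N → Fin N} (hE : ∀ u ∈ E, T.neighborSet u = {w u}) {a b c' d : Fin N}
    (habcd : [a, b, c', d].Nodup) (hlt : c a b + c c' d < ∑ u ∈ E, c u (w u)) :
    ∀ᶠ α in atBot, ∃ P : SimpleGraph (Fin N), P.IsTree ∧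
      (∀ v, (P.neighborSet v).ncard ≤ 2) ∧ cstCost P c α < cstCost T c α := by
  have hN' : (4 : ℝ) ≤ N := by exact_mod_cast hN
  have hleaf : (0 : ℝ) < 1 / N * (1 - 1 / N) := by
    rw [show (1 / N * (1 - 1 / N) : ℝ) = (N - 1) / N ^ 2 by field_simp]
    exact div_pos (by linarith) (by positivity)
  have hleaf_lt : (1 / N * (1 - 1 / N) : ℝ) < 2 / N * (1 - 2 / N) := by
    rw [← sub_pos, show (2 / N * (1 - 2 / N) - 1 / N * (1 - 1 / N) : ℝ) = (N - 3) / N ^ 2 by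
      field_simp; ring]
    exact div_pos (by linarith) (by positivity)
  obtain ⟨P, hP, hP₂, ha, hd, hmid⟩ := exists_spanning_path_of_nodup hN habcd
  filter_upwards [eventually_mul_rpow_lt_mul_rpow hleaf hleaf_lt (∑ i, ∑ j, |c i j|)
    (sub_pos.mpr hlt), eventually_le_atBot 0] with α hK hα
  refine ⟨P, hP, hP₂, ?_⟩
  calc cstCost P c α
      ≤ (1 / N * (1 - 1 / N)) ^ α * (c a b + c c' d) +
        (2 / N * (1 - 2 / N)) ^ α * ∑ i, ∑ j, |c i j| :=
        cstCost_le_of_path hP (by omega) hc hc₀ hα (by simp at habcd; tauto) ha hd hmid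
    _ < (1 / N * (1 - 1 / N)) ^ α * ∑ u ∈ E, c u (w u) := by linarith
    _ ≤ cstCost T c α := le_cstCost_of_leaves hT (by omega) hc hc₀ hE

theorem SimpleGraph.IsTree.eventually_exists_path_cstCost_lt {N : ℕ} {T : SimpleGraph (Fin N)}
    (hT : T.IsTree) {v : Fin N} (hv : 2 < (T.neighborSet v).ncard) {c : Fin N → Fin N → ℝ}
    (hc : ∀ i j, c i j = c j i) (hpos : ∀ i j, i ≠ j → 0 < c i j)
    (htri : ∀ u k v : Fin N, u ≠ k → u ≠ v → k ≠ v → c k u < c u v + c k v) :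
    ∀ᶠ α in atBot, ∃ P : SimpleGraph (Fin N), P.IsTree ∧
      (∀ v, (P.neighborSet v).ncard ≤ 2) ∧ cstCost P c α < cstCost T c α := by
  have hN : 4 ≤ N := by
    have := T.degree_lt_card_verts v
    rw [← ncard_neighborSet_eq_degree, Fintype.card_fin] at this
    omega
  obtain ⟨u₁, u₂, u₃, hu₁, hu₂, hu₃, h₁₂, h₁₃, h₂₃⟩ :=
    two_lt_card_iff.mp (hT.two_lt_card_leaves hv)
  simp only [mem_filter, mem_univ, true_and] at hu₁ hu₂ hu₃
  choose! w hw using fun u (hu : (T.neighborSet u).ncard = 1) => Set.ncard_eq_one.mp hu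
  obtain ⟨a, b, c', d, habcd, hlt⟩ := exists_nodup_add_lt_of_leaves hT.connected
    (by simp; omega) hc hpos htri (by simp [*]) (hw _ hu₁) (hw _ hu₂) (hw _ hu₃)
  refine hT.eventually_exists_path_cstCost_lt_of_leaves hN hc (fun i j h => (hpos i j h).le)
    (E := {u₁, u₂, u₃}) (w := w) (fun u hu => ?_) habcd ?_
  · simp only [mem_insert, mem_singleton] at hu
    rcases hu with rfl | rfl | rfl <;> exact hw _ ‹_›
  · rwa [sum_insert (by simp [*]), sum_insert (by simp [*]), sum_singleton, ← add_assoc]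

theorem cst_strict_triangle_path_beats_nonpath_general {N : ℕ}
    (c : Fin N → Fin N → ℝ)
    (hsymm : ∀ i j, c i j = c j i) (hpos : ∀ i j, i ≠ j → 0 < c i j)
    (htri : ∀ u k v : Fin N, u ≠ k → u ≠ v → k ≠ v → c k u < c u v + c k v) :
    ∃ α₀ : ℝ, ∀ α : ℝ, α ≤ α₀ →
      ∀ T : SimpleGraph (Fin N), T.IsTree →
        ¬ (∀ v : Fin N, (T.neighborSet v).ncard ≤ 2) →
        ∃ P : SimpleGraph (Fin N), P.IsTree ∧ (∀ v : Fin N, (P.neighborSet v).ncard ≤ 2) ∧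
          cstCost P c α < cstCost T c α := by
  refine eventually_atBot.mp (eventually_all.mpr fun T => ?_)
  by_cases hT : T.IsTree ∧ ∃ v, 2 < (T.neighborSet v).ncard
  · obtain ⟨hT, v, hv⟩ := hT
    filter_upwards [hT.eventually_exists_path_cstCost_lt hv hsymm hpos htri] with α hα _ _
    exact hα
  · refine Eventually.of_forall fun α hT' hbad => absurd ⟨hT', ?_⟩ hT
    simpa only [not_forall, not_le] using hbad

/-- Under the strict triangle inequality, for `α` negative enough, every non-path spanning
tree is beaten by some Hamiltonian path (a spanning tree of maximum degree ≤ 2). -/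
theorem cst_strict_triangle_path_beats_nonpath {N : ℕ} (hN : 3 ≤ N)
    (c : Fin N → Fin N → ℝ)
    (hsymm : ∀ i j, c i j = c j i) (hpos : ∀ i j, i ≠ j → 0 < c i j)
    (htri : ∀ u k v : Fin N, u ≠ k → u ≠ v → k ≠ v → c k u < c u v + c k v) :
    ∃ α₀ : ℝ, ∀ α : ℝ, α ≤ α₀ →
      ∀ T : SimpleGraph (Fin N), T.IsTree →
        ¬ (∀ v : Fin N, (T.neighborSet v).ncard ≤ 2) →
        ∃ P : SimpleGraph (Fin N), P.IsTree ∧ (∀ v : Fin N, (P.neighborSet v).ncard ≤ 2) ∧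
          cstCost P c α < cstCost T c α :=
  cst_strict_triangle_path_beats_nonpath_general c hsymm hpos htri
end

section
/- Let a₀, a₁, a₂ be points in a real inner product space and let w₀, w₁, w₂ > 0. Suppose b minimizes the function C(x) = w₀‖x−a₀‖ + w₁‖x−a₁‖ + w₂‖x−a₂‖ and b ∉ {a₀, a₁, a₂}. Then, with unit vectors n_i = (b−a_i)/‖b−a_i‖ for i = 0,1,2, the pairwise inner products satisfy ⟨n_i, n_j⟩ = (w_k² − w_i² − w_j²)/(2 w_i w_j) for every permutation {i,j,k} of {0,1,2}. Equivalently, the angles θ₁ between the edges (b,a₀) and (b,a₁)-opposite directions satisfy cos θ₁ = (w₀² + w₁² − w₂²)/(2w₀w₁), cos θ₂ = (w₀² + w₂² − w₁²)/(2w₀w₂), and cos(θ₁+θ₂) = (w₀² − w₁² − w₂²)/(2w₁w₂). -/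
/-!
At a minimizer `b` distinct from every `a i` the objective `∑ w i ‖x - a i‖` is
differentiable, and its gradient `∑ w i n i` vanishes. For three terms this says the vectors
`w i n i` close up into a triangle with side lengths `w 0, w 1, w 2`; expanding
`‖w i n i + w j n j‖² = ‖w k n k‖²` is the law of cosines for that triangle.
-/

theorem Fin.sum_univ_three_of_ne {M : Type*} [AddCommMonoid M] (f : Fin 3 → M) {i j k : Fin 3}
    (hij : i ≠ j) (hjk : j ≠ k) (hik : i ≠ k) : ∑ l, f l = f i + f j + f k := by
  rw [Fin.sum_univ_three]
  fin_cases i <;> fin_cases j <;> fin_cases k <;> simp_all <;> abel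

section

variable {E : Type*} [NormedAddCommGroup E] [InnerProductSpace ℝ E]

theorem hasFDerivAt_norm {x : E} (hx : x ≠ 0) :
    HasFDerivAt (fun y : E => ‖y‖) (innerSL ℝ (‖x‖⁻¹ • x)) x := by
  have hx' : ‖x‖ ≠ 0 := norm_ne_zero_iff.2 hx
  have hsqrt : HasDerivAt Real.sqrt (1 / (2 * ‖x‖)) (‖x‖ ^ 2) := by
    simpa [Real.sqrt_sq (norm_nonneg x)] using Real.hasDerivAt_sqrt (pow_ne_zero 2 hx')
  have h := hsqrt.comp_hasFDerivAt x (hasStrictFDerivAt_norm_sq x).hasFDerivAt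
  rw [show Real.sqrt ∘ (fun y : E => ‖y‖ ^ 2) = (‖·‖) from
    funext fun y => Real.sqrt_sq (norm_nonneg y)] at h
  refine h.congr_fderiv ?_
  rw [map_smul, ← Nat.cast_smul_eq_nsmul ℝ, smul_smul]
  congr 1
  push_cast
  field_simp

theorem hasFDerivAt_norm_sub {a x : E} (hx : x ≠ a) :
    HasFDerivAt (fun y : E => ‖y - a‖) (innerSL ℝ (‖x - a‖⁻¹ • (x - a))) x :=
  ((hasFDerivAt_norm (sub_ne_zero.2 hx)).comp x (hasFDerivAt_sub_const a)).congr_fderiv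
    (ContinuousLinearMap.comp_id _)

theorem hasFDerivAt_sum_mul_norm_sub {ι : Type*} [Fintype ι] (a : ι → E) (w : ι → ℝ) {b : E}
    (hb : ∀ i, b ≠ a i) :
    HasFDerivAt (fun x => ∑ i, w i * ‖x - a i‖)
      (innerSL ℝ (∑ i, w i • ‖b - a i‖⁻¹ • (b - a i))) b := by
  rw [map_sum]
  refine HasFDerivAt.fun_sum fun i _ => ?_
  rw [map_smul]
  exact (hasFDerivAt_norm_sub (hb i)).const_mul (w i)

theorem sum_smul_unit_eq_zero_of_isLocalMin {ι : Type*} [Fintype ι] {a : ι → E} {w : ι → ℝ}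
    {b : E} (hb : ∀ i, b ≠ a i) (hmin : IsLocalMin (fun x => ∑ i, w i * ‖x - a i‖) b) :
    ∑ i, w i • ‖b - a i‖⁻¹ • (b - a i) = 0 :=
  innerSL_inj.1 <| (hmin.hasFDerivAt_eq_zero (hasFDerivAt_sum_mul_norm_sub a w hb)).trans
    (map_zero _).symm

theorem two_mul_inner_of_add_add_eq_zero {u v z : E} (h : u + v + z = 0) :
    2 * inner ℝ u v = ‖z‖ ^ 2 - ‖u‖ ^ 2 - ‖v‖ ^ 2 := by
  rw [eq_neg_of_add_eq_zero_right h, norm_neg, norm_add_sq_real]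
  ring

end

/-- Branching angles at an (uncollapsed) weighted Fermat point: if `b` minimizes
`C(x) = Σ_i w_i ‖x - a_i‖` and `b` is none of the `a_i`, then the unit vectors
`n_i = (b - a_i)/‖b - a_i‖` satisfy `⟨n_i, n_j⟩ = (w_k² - w_i² - w_j²)/(2 w_i w_j)`
for every permutation `{i, j, k}` of `{0, 1, 2}`. -/
theorem fermat_point_branching_angles {E : Type*} [NormedAddCommGroup E]
    [InnerProductSpace ℝ E] (a : Fin 3 → E) (w : Fin 3 → ℝ) (hw : ∀ i, 0 < w i)
    (b : E) (hb : ∀ i, b ≠ a i)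
    (hmin : ∀ x : E, ∑ i, w i * ‖b - a i‖ ≤ ∑ i, w i * ‖x - a i‖) :
    ∀ i j k : Fin 3, i ≠ j → j ≠ k → i ≠ k →
      (inner ℝ (‖b - a i‖⁻¹ • (b - a i)) (‖b - a j‖⁻¹ • (b - a j)) : ℝ)
        = (w k ^ 2 - w i ^ 2 - w j ^ 2) / (2 * w i * w j) := by
  intro i j k hij hjk hik
  set n : Fin 3 → E := fun l => ‖b - a l‖⁻¹ • (b - a l)
  have hn : ∀ l, ‖w l • n l‖ = w l := fun l => by
    simp only [n, norm_smul, norm_inv, norm_norm, Real.norm_of_nonneg (hw l).le,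
      inv_mul_cancel₀ (norm_ne_zero_iff.2 (sub_ne_zero.2 (hb l))), mul_one]
  have hbalance : w i • n i + w j • n j + w k • n k = 0 := by
    rw [← Fin.sum_univ_three_of_ne (fun l => w l • n l) hij hjk hik]
    exact sum_smul_unit_eq_zero_of_isLocalMin hb (Filter.Eventually.of_forall hmin)
  have hcos := two_mul_inner_of_add_add_eq_zero hbalance
  rw [hn, hn, hn, real_inner_smul_left, real_inner_smul_right] at hcos
  rw [eq_div_iff (mul_pos (mul_pos two_pos (hw i)) (hw j)).ne']
  linear_combination hcos
end

section
/- Let α ∈ (0, 1/2] and let x, y be real numbers with x > 0, y > 0, and x + y < 1. Then ((x+y)(1−x−y))^{2α} < (x(1−x))^{2α} + (y(1−y))^{2α}. (This strict subadditivity of F(t)^{2α} for F(t)=t(1−t) implies that in the planar BCST problem with α ∈ [0, 0.5], the optimal V-branching angles ψ_i at a degree-4 Steiner point all exceed π/2, so that their sum exceeds 2π and degree-4 Steiner points cannot occur in an optimal solution unless they collapse with a terminal.) -/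
/-- Strict subadditivity of `(t(1-t))^{2α}` for `α ∈ (0, 1/2]`: for `x, y > 0` with
`x + y < 1`, `((x+y)(1-x-y))^{2α} < (x(1-x))^{2α} + (y(1-y))^{2α}`. -/
theorem strict_subadditivity_F_pow (α : ℝ) (hα₀ : 0 < α) (hα : α ≤ 1 / 2)
    (x y : ℝ) (hx : 0 < x) (hy : 0 < y) (hxy : x + y < 1) :
    ((x + y) * (1 - x - y)) ^ (2 * α)
      < (x * (1 - x)) ^ (2 * α) + (y * (1 - y)) ^ (2 * α) := by
  set β := 2 * α with hβ
  have hβ0 : 0 < β := by positivity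
  have hβ1 : β ≤ 1 := by rw [hβ]; linarith
  have hA : 0 ≤ x * (1 - x) := by nlinarith
  have hB : 0 ≤ y * (1 - y) := by nlinarith
  have hC : 0 ≤ (x + y) * (1 - x - y) := by nlinarith
  have h1 : (x + y) * (1 - x - y) < x * (1 - x) + y * (1 - y) := by nlinarith
  have h2 : (x * (1 - x) + y * (1 - y)) ^ β
      ≤ (x * (1 - x)) ^ β + (y * (1 - y)) ^ β := by
    have h := NNReal.rpow_add_le_add_rpow (x * (1 - x)).toNNReal
      (y * (1 - y)).toNNReal hβ0.le hβ1
    have := NNReal.coe_le_coe.2 h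
    simpa [NNReal.coe_rpow, Real.coe_toNNReal _ hA, Real.coe_toNNReal _ hB,
      Real.toNNReal_add hA hB] using this
  calc ((x + y) * (1 - x - y)) ^ β
      < (x * (1 - x) + y * (1 - y)) ^ β := Real.rpow_lt_rpow hC h1 hβ0
    _ ≤ _ := h2
end

section
/- Let m₂, m₃ be real numbers with m₂ > 0, m₃ > 0, and m₂ + m₃ < 1. Set R = √(m₂² − m₂m₃ + m₃²) and D = 1 + (2/3)(m₂ + m₃) + (m₂ − m₃)² − (8/3)R. Then D > 0 and (1/2)(1 + m₂ + m₃) + (1/2)√D > 1. (Equivalently, the root m₁ = (1/2)(1 − m₂ − m₃ + √D) of the quartic angle-compatibility equation arising in the case α = 1 satisfies m₁ + m₂ + m₃ > 1, violating the mass constraint Σᵢ m_i = 1 for a degree-4 Steiner point; this is one of the two root exclusions proving that degree-4 Steiner points are infeasible in the planar BCST at α = 1.) -/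
/-- Root exclusion for the quartic angle-compatibility equation at `α = 1`: for
`m₂, m₃ > 0` with `m₂ + m₃ < 1`, setting `R = √(m₂² - m₂m₃ + m₃²)` and
`D = 1 + (2/3)(m₂ + m₃) + (m₂ - m₃)² - (8/3)R`, one has `D > 0` and
`(1/2)(1 + m₂ + m₃) + (1/2)√D > 1`. -/
theorem quartic_root_exclusion (m₂ m₃ : ℝ) (hm₂ : 0 < m₂) (hm₃ : 0 < m₃)
    (hsum : m₂ + m₃ < 1) :
    0 < 1 + (2 / 3) * (m₂ + m₃) + (m₂ - m₃) ^ 2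
        - (8 / 3) * Real.sqrt (m₂ ^ 2 - m₂ * m₃ + m₃ ^ 2) ∧
    1 < (1 / 2) * (1 + m₂ + m₃)
        + (1 / 2) * Real.sqrt (1 + (2 / 3) * (m₂ + m₃) + (m₂ - m₃) ^ 2
            - (8 / 3) * Real.sqrt (m₂ ^ 2 - m₂ * m₃ + m₃ ^ 2)) := by
  set R := Real.sqrt (m₂ ^ 2 - m₂ * m₃ + m₃ ^ 2) with hRdef
  have hnn : (0:ℝ) ≤ m₂ ^ 2 - m₂ * m₃ + m₃ ^ 2 := by nlinarith [sq_nonneg (m₂ - m₃)]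
  have hR2 : R ^ 2 = m₂ ^ 2 - m₂ * m₃ + m₃ ^ 2 := Real.sq_sqrt hnn
  have hcpos : (0:ℝ) < (m₂ + m₃) - (3/2) * (m₂ * m₃) := by
    nlinarith [sq_nonneg (m₂ - m₃)]
  have hRlt : R < (m₂ + m₃) - (3/2) * (m₂ * m₃) := by
    rw [hRdef, Real.sqrt_lt' hcpos]
    nlinarith [mul_pos hm₂ hm₃, sq_nonneg (m₂*m₃)]
  set D := 1 + (2 / 3) * (m₂ + m₃) + (m₂ - m₃) ^ 2 - (8 / 3) * R with hDdef
  have hDgt : (1 - (m₂ + m₃)) ^ 2 < D := by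
    have hp := mul_pos hm₂ hm₃
    rw [hDdef]
    nlinarith [hRlt]
  have h1s : (0:ℝ) < 1 - (m₂ + m₃) := by linarith
  have hDpos : 0 < D := lt_of_le_of_lt (sq_nonneg _) hDgt
  refine ⟨hDpos, ?_⟩
  have hsqrt : 1 - (m₂ + m₃) < Real.sqrt D := by
    rw [show Real.sqrt D = Real.sqrt D from rfl]
    have := (Real.lt_sqrt (le_of_lt h1s)).mpr hDgt
    exact this
  linarith
end

section
/- Let E be a finite set of pairs of indices, let w_e ≥ 0 for each e ∈ E, and let x assign to each index a point in ℝ^d such that ‖x_i − x_j‖ > 0 for every edge (i,j) ∈ E. Define C(y) = Σ_{(i,j)∈E} w_{ij} ‖y_i − y_j‖ and the reweighted quadratic Q(y) = Σ_{(i,j)∈E} (w_{ij}/‖x_i − x_j‖) ‖y_i − y_j‖². If x' is any configuration (agreeing with x on the fixed terminal indices) satisfying Q(x') ≤ Q(x), then C(x') ≤ C(x) − Σ_{(i,j)∈E} (w_{ij}/2) · (‖x'_i − x'_j‖ − ‖x_i − x_j‖)² / ‖x_i − x_j‖. In particular each iteration of the iteratively reweighted least squares scheme does not increase the cost C, and decreases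 it strictly unless all edge lengths are unchanged. -/
/-!
Each edge length `b = ‖x'_i - x'_j‖` is compared with the old length `a = ‖x_i - x_j‖ > 0` via
the exact form of AM–GM,
`b = (b² / a + a) / 2 - (b - a)² / (2a)`.
Multiplying by `w` and summing, `C(x') = (Q(x') + Q(x)) / 2 - gap`, while `Q(x) = C(x)`;
so `Q(x') ≤ Q(x)` gives `C(x') ≤ C(x) - gap`.
-/

open Finset

lemma mul_eq_reweighted_sq_average_sub (w a b : ℝ) (ha : a ≠ 0) :
    w * b = ((w / a) * b ^ 2 + (w / a) * a ^ 2) / 2 - w / 2 * (b - a) ^ 2 / a := by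
  field_simp
  ring

lemma Finset.sum_mul_le_sub_of_sum_reweighted_sq_le {α : Type*} (s : Finset α)
    (w a b : α → ℝ) (ha : ∀ i ∈ s, a i ≠ 0)
    (hQ : ∑ i ∈ s, (w i / a i) * b i ^ 2 ≤ ∑ i ∈ s, (w i / a i) * a i ^ 2) :
    ∑ i ∈ s, w i * b i ≤ ∑ i ∈ s, w i * a i - ∑ i ∈ s, w i / 2 * (b i - a i) ^ 2 / a i := by
  have hC : ∑ i ∈ s, w i * b i = (∑ i ∈ s, (w i / a i) * b i ^ 2
      + ∑ i ∈ s, (w i / a i) * a i ^ 2) / 2 - ∑ i ∈ s, w i / 2 * (b i - a i) ^ 2 / a i := by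
    rw [← sum_add_distrib, sum_div, ← sum_sub_distrib]
    exact sum_congr rfl fun i hi => mul_eq_reweighted_sq_average_sub _ _ _ (ha i hi)
  have hQC : ∑ i ∈ s, (w i / a i) * a i ^ 2 = ∑ i ∈ s, w i * a i :=
    sum_congr rfl fun i hi => by field_simp [ha i hi]
  linarith

theorem irls_descent_general {ι : Type*} {d : ℕ} (E : Finset (ι × ι)) (w : ι × ι → ℝ)
    (x x' : ι → EuclideanSpace ℝ (Fin d))
    (hx : ∀ e ∈ E, 0 < ‖x e.1 - x e.2‖)
    (hQ : ∑ e ∈ E, (w e / ‖x e.1 - x e.2‖) * ‖x' e.1 - x' e.2‖ ^ 2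
        ≤ ∑ e ∈ E, (w e / ‖x e.1 - x e.2‖) * ‖x e.1 - x e.2‖ ^ 2) :
    ∑ e ∈ E, w e * ‖x' e.1 - x' e.2‖
      ≤ ∑ e ∈ E, w e * ‖x e.1 - x e.2‖
        - ∑ e ∈ E, (w e / 2) * (‖x' e.1 - x' e.2‖ - ‖x e.1 - x e.2‖) ^ 2
            / ‖x e.1 - x e.2‖ :=
  E.sum_mul_le_sub_of_sum_reweighted_sq_le w _ _ (fun e he => (hx e he).ne') hQ

/-- IRLS descent step: with `C(y) = Σ_{(i,j)∈E} w_{ij} ‖y_i - y_j‖` and reweighted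
quadratic `Q(y) = Σ_{(i,j)∈E} (w_{ij}/‖x_i - x_j‖) ‖y_i - y_j‖²`, any configuration `x'`
with `Q(x') ≤ Q(x)` satisfies
`C(x') ≤ C(x) - Σ_{(i,j)∈E} (w_{ij}/2) (‖x'_i - x'_j‖ - ‖x_i - x_j‖)² / ‖x_i - x_j‖`. -/
theorem irls_descent {ι : Type*} {d : ℕ} (E : Finset (ι × ι)) (w : ι × ι → ℝ)
    (hw : ∀ e ∈ E, 0 ≤ w e)
    (x x' : ι → EuclideanSpace ℝ (Fin d))
    (hx : ∀ e ∈ E, 0 < ‖x e.1 - x e.2‖)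
    (hQ : ∑ e ∈ E, (w e / ‖x e.1 - x e.2‖) * ‖x' e.1 - x' e.2‖ ^ 2
        ≤ ∑ e ∈ E, (w e / ‖x e.1 - x e.2‖) * ‖x e.1 - x e.2‖ ^ 2) :
    ∑ e ∈ E, w e * ‖x' e.1 - x' e.2‖
      ≤ ∑ e ∈ E, w e * ‖x e.1 - x e.2‖
        - ∑ e ∈ E, (w e / 2) * (‖x' e.1 - x' e.2‖ - ‖x e.1 - x e.2‖) ^ 2
            / ‖x e.1 - x e.2‖ :=
  irls_descent_general E w x x' hx hQ
end
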